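/- Let F : ℝⁿ → ℝ be twice continuously differentiable with L₂-Lipschitz Hessian, and let α > 0. Fix x ∈ ℝⁿ, g ∈ ℝⁿ, and a symmetric matrix Ĥ ∈ ℝ^{n×n}, and let x⁺ be a global minimizer over ℝⁿ of the model f̂(y) = ⟨g, y − x⟩ + (1/2)⟨y − x, Ĥ(y − x)⟩ + (α/6)‖y − x‖³. Then the matrix inequality ∇²F(x⁺) ⪰ (∇²F(x) − Ĥ) − ((α + 2L₂)/2) ‖x⁺ − x‖ · I holds, i.e., ∇²F(x⁺) − ∇²F(x) + Ĥ + ((α + 2L₂)/2)‖x⁺ − x‖ I is positive semidefinite; consequently λ_min(∇²F(x⁺)) ≥ λ_min(∇²F(x) − Ĥ) − ((α + 2L₂)/2) ‖x⁺ − x‖. -/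

import Mathlib

open scoped BigOperators

/-- The smallest eigenvalue of a real symmetric matrix, characterized as the minimum of the
quadratic form `⟨w, Aw⟩` over unit vectors `w`. -/
noncomputable def lambdaMin {n : ℕ} (A : Matrix (Fin n) (Fin n) ℝ) : ℝ :=
  sInf {c : ℝ | ∃ w : EuclideanSpace ℝ (Fin n), ‖w‖ = 1 ∧ c = ∑ i, ∑ j, w i * A i j * w j}

/-!
At a global minimiser `s` of the cubic model `m(u) = ⟪g, u⟫ + ½⟪u, Ĥu⟫ + (α/6)‖u‖³`, the
first-order condition `g + Ĥs + (α/2)‖s‖ s = 0` turns `m(y) - m(s)`, for `‖y‖ = ‖s‖`, into the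
quadratic form `½⟪y - s, (Ĥ + (α/2)‖s‖ I)(y - s)⟫`. Every direction `v` with `⟪s, v⟫ ≠ 0` is a
multiple of such a chord `y - s`, so `Ĥ + (α/2)‖s‖ I ⪰ 0` (by continuity in the remaining
directions, and by scaling when `s = 0`). The Lipschitz bound gives
`∇²F(x⁺) - ∇²F(x) + L₂‖x⁺ - x‖ I ⪰ 0`; adding the two yields the matrix inequality, and the
eigenvalue bound follows from the variational description of `λ_min`.
-/

open scoped RealInnerProductSpace
open Set

variable {E : Type*} [NormedAddCommGroup E] [InnerProductSpace ℝ E]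

theorem ContinuousLinearMap.neg_opNorm_mul_sq_le_inner (T : E →L[ℝ] E) (v : E) :
    -(‖T‖ * ‖v‖ ^ 2) ≤ ⟪v, T v⟫ :=
  calc -(‖T‖ * ‖v‖ ^ 2) = -(‖v‖ * (‖T‖ * ‖v‖)) := by ring
    _ ≤ -(‖v‖ * ‖T v‖) := by gcongr; exact T.le_opNorm v
    _ ≤ ⟪v, T v⟫ := neg_le_of_abs_le (abs_real_inner_le_norm v (T v))

noncomputable def cubicModel (g : E) (T : E →L[ℝ] E) (α : ℝ) (u : E) : ℝ :=
  ⟪g, u⟫ + 1 / 2 * ⟪u, T u⟫ + α / 6 * ‖u‖ ^ 3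

namespace cubicModel

variable {g s : E} {T : E →L[ℝ] E} {α : ℝ}

theorem hasFDerivAt (hT : (T : E →ₗ[ℝ] E).IsSymmetric) (s : E) :
    HasFDerivAt (cubicModel g T α) (innerSL ℝ (g + T s + (α / 2 * ‖s‖) • s)) s := by
  have hcube : HasFDerivAt (fun u : E => ‖u‖ ^ 3) ((3 * ‖s‖) • innerSL ℝ s) s := by
    convert hasFDerivAt_norm_rpow s (p := 3) (by norm_num) using 1
    · ext u; norm_cast
    · norm_num
  refine ((((innerSL ℝ g).hasFDerivAt.add
    (((hasFDerivAt_id s).inner ℝ T.hasFDerivAt).const_mul (1 / 2))).add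
    (hcube.const_mul (α / 6)))).congr_fderiv ?_
  ext w
  have hsym : ⟪s, T w⟫ = ⟪T s, w⟫ := (hT s w).symm
  simp [hsym, real_inner_comm w]
  ring

theorem gradient_eq_zero (hT : (T : E →ₗ[ℝ] E).IsSymmetric)
    (hmin : ∀ u, cubicModel g T α s ≤ cubicModel g T α u) :
    g + T s + (α / 2 * ‖s‖) • s = 0 := by
  have hloc : IsLocalMin (cubicModel g T α) s := Filter.Eventually.of_forall hmin
  rw [← norm_eq_zero, ← innerSL_apply_norm ℝ, norm_eq_zero]
  exact hloc.hasFDerivAt_eq_zero (hasFDerivAt hT s)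

theorem sub_eq_of_norm_eq (hT : (T : E →ₗ[ℝ] E).IsSymmetric)
    (hmin : ∀ u, cubicModel g T α s ≤ cubicModel g T α u) {y : E} (hy : ‖y‖ = ‖s‖) :
    cubicModel g T α y - cubicModel g T α s =
      1 / 2 * (⟪y - s, T (y - s)⟫ + α / 2 * ‖s‖ * ‖y - s‖ ^ 2) := by
  have hg : g = -T s - (α / 2 * ‖s‖) • s := by
    rw [← sub_eq_zero, ← gradient_eq_zero hT hmin]; abel
  have hsym : ⟪s, T y⟫ = ⟪T s, y⟫ := (hT s y).symm
  simp only [cubicModel, hg, hy, map_sub, inner_sub_left, inner_sub_right, inner_neg_left,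
    inner_smul_left, norm_sub_sq_real, RCLike.conj_to_real]
  linear_combination (1 / 2 : ℝ) * hsym - (1 / 2 : ℝ) * real_inner_comm y (T s)
    + real_inner_comm s (T s) - (α / 2 * ‖s‖) * real_inner_comm y s
    + (α / 2 * ‖s‖) * real_inner_self_eq_norm_sq s

theorem secondOrder_of_inner_ne_zero (hT : (T : E →ₗ[ℝ] E).IsSymmetric)
    (hmin : ∀ u, cubicModel g T α s ≤ cubicModel g T α u) {v : E} (hv : ⟪s, v⟫ ≠ 0) :
    0 ≤ ⟪v, T v⟫ + α / 2 * ‖s‖ * ‖v‖ ^ 2 := by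
  have hv0 : v ≠ 0 := by rintro rfl; simp at hv
  -- `s + τ • v` is the second intersection of the line through `s` in direction `v`
  -- with the sphere of radius `‖s‖`
  set τ := -2 * ⟪s, v⟫ / ‖v‖ ^ 2
  have hτ : τ ≠ 0 := by positivity
  have hτv : τ * ‖v‖ ^ 2 = -2 * ⟪s, v⟫ := by
    simp only [τ]; field_simp
  have hnorm : ‖s + τ • v‖ = ‖s‖ := by
    rw [← sq_eq_sq₀ (norm_nonneg _) (norm_nonneg _), norm_add_sq_real, inner_smul_right,
      norm_smul, mul_pow, Real.norm_eq_abs, sq_abs]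
    linear_combination τ * hτv
  have h := sub_eq_of_norm_eq hT hmin hnorm
  simp only [add_sub_cancel_left, map_smul, inner_smul_left, inner_smul_right, norm_smul,
    Real.norm_eq_abs, mul_pow, sq_abs, RCLike.conj_to_real] at h
  have hle := sub_nonneg.mpr (hmin (s + τ • v))
  rw [h] at hle
  refine nonneg_of_mul_nonneg_right (a := τ ^ 2 / 2) ?_ (by positivity)
  linarith

theorem secondOrder_of_eq_zero (hT : (T : E →ₗ[ℝ] E).IsSymmetric)
    (hmin : ∀ u, cubicModel g T α 0 ≤ cubicModel g T α u) (v : E) : 0 ≤ ⟪v, T v⟫ := by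
  have hg : g = 0 := by simpa using gradient_eq_zero hT hmin
  have hpos : ∀ t ∈ Ioi (0 : ℝ), 0 ≤ ⟪v, T v⟫ + α / 3 * ‖v‖ ^ 3 * t := by
    intro t (ht : 0 < t)
    have h := hmin (t • v)
    simp only [cubicModel, hg, inner_zero_left, map_smul, inner_smul_left, inner_smul_right,
      norm_smul, Real.norm_eq_abs, abs_of_pos ht, RCLike.conj_to_real, norm_zero] at h
    nlinarith [pow_pos ht 2]
  have hcont : ContinuousWithinAt (fun t : ℝ => ⟪v, T v⟫ + α / 3 * ‖v‖ ^ 3 * t) (Ioi 0) 0 := by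
    fun_prop
  simpa using continuousWithinAt_const.closure_le (by simp) hcont hpos

theorem secondOrder (hT : (T : E →ₗ[ℝ] E).IsSymmetric)
    (hmin : ∀ u, cubicModel g T α s ≤ cubicModel g T α u) (v : E) :
    0 ≤ ⟪v, T v⟫ + α / 2 * ‖s‖ * ‖v‖ ^ 2 := by
  rcases eq_or_ne s 0 with rfl | hs
  · simpa using secondOrder_of_eq_zero hT hmin v
  by_cases hv : ⟪s, v⟫ = 0
  · -- perturb `v` along `s` to leave the hyperplane `s⊥`, then pass to the limit
    have hpos : ∀ ε ∈ Ioi (0 : ℝ),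
        0 ≤ ⟪v + ε • s, T (v + ε • s)⟫ + α / 2 * ‖s‖ * ‖v + ε • s‖ ^ 2 := by
      intro ε (hε : 0 < ε)
      refine secondOrder_of_inner_ne_zero hT hmin ?_
      rw [inner_add_right, hv, inner_smul_right, real_inner_self_eq_norm_sq]
      positivity
    have hcont : ContinuousWithinAt (fun ε : ℝ =>
        ⟪v + ε • s, T (v + ε • s)⟫ + α / 2 * ‖s‖ * ‖v + ε • s‖ ^ 2) (Ioi 0) 0 := by
      fun_prop
    simpa using continuousWithinAt_const.closure_le (by simp) hcont hpos
  · exact secondOrder_of_inner_ne_zero hT hmin hv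

end cubicModel

theorem EuclideanSpace.sum_mul_eq_inner {ι : Type*} [Fintype ι] (g u : EuclideanSpace ℝ ι) :
    ∑ i, g i * u i = ⟪g, u⟫ := by
  simp [PiLp.inner_apply, mul_comm]

namespace Matrix

variable {ι : Type*} [Fintype ι] [DecidableEq ι]

theorem sum_sum_mul_mul_eq_inner_toEuclideanCLM (A : Matrix ι ι ℝ) (u v : EuclideanSpace ℝ ι) :
    ∑ i, ∑ j, u i * A i j * v j = ⟪u, toEuclideanCLM (𝕜 := ℝ) A v⟫ := by
  simp only [inner_toEuclideanCLM, dotProduct, mulVec, Finset.mul_sum, mul_assoc]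

theorem posSemidef_iff_inner_toEuclideanCLM_nonneg {A : Matrix ι ι ℝ} :
    A.PosSemidef ↔ A.IsHermitian ∧ ∀ v, 0 ≤ ⟪v, toEuclideanCLM (𝕜 := ℝ) A v⟫ := by
  rw [← isPositive_toEuclideanLin_iff, LinearMap.IsPositive, isSymmetric_toEuclideanLin_iff]
  simp [← coe_toEuclideanCLM_eq_toEuclideanLin, real_inner_comm]

theorem posSemidef_add_smul_one {A : Matrix ι ι ℝ} {c : ℝ} (hA : A.IsHermitian)
    (h : ∀ v, 0 ≤ ⟪v, toEuclideanCLM (𝕜 := ℝ) A v⟫ + c * ‖v‖ ^ 2) :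
    (A + c • 1).PosSemidef := by
  refine posSemidef_iff_inner_toEuclideanCLM_nonneg.mpr ⟨hA.add ?_, fun v => ?_⟩
  · exact isHermitian_one.smul (IsSelfAdjoint.all c)
  · simpa [inner_add_right, inner_smul_right, real_inner_self_eq_norm_sq] using h v

theorem posSemidef_add_smul_one_of_norm_le {A : Matrix ι ι ℝ} {c : ℝ} (hA : A.IsHermitian)
    (h : ‖toEuclideanCLM (𝕜 := ℝ) A‖ ≤ c) : (A + c • 1).PosSemidef := by
  refine posSemidef_add_smul_one hA fun v => ?_
  nlinarith [(toEuclideanCLM (𝕜 := ℝ) A).neg_opNorm_mul_sq_le_inner v,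
    mul_le_mul_of_nonneg_right h (sq_nonneg ‖v‖)]

theorem isHermitian_of_iteratedFDeriv_eq {F : EuclideanSpace ℝ ι → ℝ} {y : EuclideanSpace ℝ ι}
    {H : Matrix ι ι ℝ} (hF : ContDiffAt ℝ 2 F y)
    (hH : ∀ w₁ w₂, iteratedFDeriv ℝ 2 F y ![w₁, w₂] = ∑ i, ∑ j, w₁ i * H i j * w₂ j) :
    H.IsHermitian := by
  rw [← isSymmetric_toEuclideanLin_iff, ← coe_toEuclideanCLM_eq_toEuclideanLin]
  intro u v
  have hform : ∀ w₁ w₂, fderiv ℝ (fderiv ℝ F) y w₁ w₂ = ⟪w₁, toEuclideanCLM (𝕜 := ℝ) H w₂⟫ := by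
    intro w₁ w₂
    simpa [iteratedFDeriv_two_apply, sum_sum_mul_mul_eq_inner_toEuclideanCLM] using hH w₁ w₂
  have h := (hF.isSymmSndFDerivAt (by simp)).eq v u
  rw [hform, hform] at h
  simpa [real_inner_comm] using h

end Matrix

theorem lambdaMin_eq {n : ℕ} (A : Matrix (Fin n) (Fin n) ℝ) :
    lambdaMin A = sInf {c | ∃ w : EuclideanSpace ℝ (Fin n), ‖w‖ = 1 ∧
      c = ⟪w, Matrix.toEuclideanCLM (𝕜 := ℝ) A w⟫} := by
  simp only [lambdaMin, Matrix.sum_sum_mul_mul_eq_inner_toEuclideanCLM]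

theorem lambdaMin_le_inner {n : ℕ} (A : Matrix (Fin n) (Fin n) ℝ) {w : EuclideanSpace ℝ (Fin n)}
    (hw : ‖w‖ = 1) : lambdaMin A ≤ ⟪w, Matrix.toEuclideanCLM (𝕜 := ℝ) A w⟫ := by
  rw [lambdaMin_eq]
  refine csInf_le ⟨-‖Matrix.toEuclideanCLM (𝕜 := ℝ) A‖, ?_⟩ ⟨w, hw, rfl⟩
  rintro c ⟨u, hu, rfl⟩
  simpa [hu] using (Matrix.toEuclideanCLM (𝕜 := ℝ) A).neg_opNorm_mul_sq_le_inner u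

theorem lambdaMin_sub_le_lambdaMin {n : ℕ} {A B : Matrix (Fin n) (Fin n) ℝ} {r : ℝ} (hr : 0 ≤ r)
    (h : (B - A + r • 1).PosSemidef) : lambdaMin A - r ≤ lambdaMin B := by
  rcases Nat.eq_zero_or_pos n with rfl | hn
  · have hempty : ∀ M : Matrix (Fin 0) (Fin 0) ℝ, lambdaMin M = 0 := fun M => by
      simp [lambdaMin, Subsingleton.elim _ (0 : EuclideanSpace ℝ (Fin 0))]
    simp [hempty, hr]
  rw [lambdaMin_eq B]
  refine le_csInf ⟨_, EuclideanSpace.single ⟨0, hn⟩ 1, by simp, rfl⟩ ?_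
  rintro c ⟨w, hw, rfl⟩
  have hpsd := (Matrix.posSemidef_iff_inner_toEuclideanCLM_nonneg.mp h).2 w
  simp only [map_add, map_sub, map_smul, map_one, add_apply, sub_apply, smul_apply,
    one_apply_eq_self, inner_add_right, inner_sub_right, inner_smul_right,
    real_inner_self_eq_norm_sq, hw, one_pow, mul_one] at hpsd
  linarith [lambdaMin_le_inner A hw]

/-- Let `F : ℝⁿ → ℝ` be twice continuously differentiable with `L₂`-Lipschitz
Hessian (where `HF y` is the Hessian matrix of `F` at `y`), and let `α > 0`.  Fix `x`, `g` and a
symmetric matrix `Ĥ`, and let `x⁺` be a global minimizer over `ℝⁿ` of the model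
`f̂(y) = ⟨g, y−x⟩ + (1/2)⟨y−x, Ĥ(y−x)⟩ + (α/6)‖y−x‖³`.  Then
`∇²F(x⁺) − ∇²F(x) + Ĥ + ((α+2L₂)/2)‖x⁺−x‖ I` is positive semidefinite; consequently
`λ_min(∇²F(x⁺)) ≥ λ_min(∇²F(x) − Ĥ) − ((α+2L₂)/2)‖x⁺−x‖`.  The Hessian `L₂`-Lipschitz
condition is stated in the spectral norm, i.e. the operator norm on Euclidean space. -/
theorem statement16 {n : ℕ} (F : EuclideanSpace ℝ (Fin n) → ℝ) (hF : ContDiff ℝ 2 F)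
    (HF : EuclideanSpace ℝ (Fin n) → Matrix (Fin n) (Fin n) ℝ)
    (hHF : ∀ (y : EuclideanSpace ℝ (Fin n)) (w₁ w₂ : EuclideanSpace ℝ (Fin n)),
      iteratedFDeriv ℝ 2 F y ![w₁, w₂] = ∑ i, ∑ j, w₁ i * HF y i j * w₂ j)
    (L₂ : ℝ) (hL₂ : 0 ≤ L₂)
    (hLip : ∀ x y : EuclideanSpace ℝ (Fin n),
      ‖Matrix.toEuclideanCLM (𝕜 := ℝ) (HF x - HF y)‖ ≤ L₂ * ‖x - y‖)
    (α : ℝ) (hα : 0 < α)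
    (x g : EuclideanSpace ℝ (Fin n)) (Hhat : Matrix (Fin n) (Fin n) ℝ) (hHhat : Hhat.IsSymm)
    (xplus : EuclideanSpace ℝ (Fin n))
    (hmin : ∀ y : EuclideanSpace ℝ (Fin n),
      (∑ i, g i * (xplus - x) i) +
          (1 / 2) * (∑ i, ∑ j, (xplus - x) i * Hhat i j * (xplus - x) j) +
          (α / 6) * ‖xplus - x‖ ^ 3 ≤
        (∑ i, g i * (y - x) i) + (1 / 2) * (∑ i, ∑ j, (y - x) i * Hhat i j * (y - x) j) +
          (α / 6) * ‖y - x‖ ^ 3) :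
    (HF xplus - HF x + Hhat +
        (((α + 2 * L₂) / 2) * ‖xplus - x‖) • (1 : Matrix (Fin n) (Fin n) ℝ)).PosSemidef ∧
      lambdaMin (HF x - Hhat) - ((α + 2 * L₂) / 2) * ‖xplus - x‖ ≤ lambdaMin (HF xplus) := by
  set s := xplus - x
  have hHess : ∀ y, (HF y).IsHermitian := fun y =>
    Matrix.isHermitian_of_iteratedFDeriv_eq hF.contDiffAt (hHF y)
  have hHhatHerm : Hhat.IsHermitian := Matrix.isHermitian_iff_isSymm.mpr hHhat
  have hmodel : ∀ u, cubicModel g (Matrix.toEuclideanCLM (𝕜 := ℝ) Hhat) α s ≤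
      cubicModel g (Matrix.toEuclideanCLM (𝕜 := ℝ) Hhat) α u := fun u => by
    simpa only [cubicModel, add_sub_cancel_left, EuclideanSpace.sum_mul_eq_inner,
      Matrix.sum_sum_mul_mul_eq_inner_toEuclideanCLM] using hmin (x + u)
  have hcubic : (Hhat + (α / 2 * ‖s‖) • 1).PosSemidef :=
    Matrix.posSemidef_add_smul_one hHhatHerm (cubicModel.secondOrder
      (Matrix.isSymmetric_toEuclideanLin_iff.mpr hHhatHerm) hmodel)
  have hlip : (HF xplus - HF x + (L₂ * ‖s‖) • 1).PosSemidef :=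
    Matrix.posSemidef_add_smul_one_of_norm_le ((hHess xplus).sub (hHess x)) (hLip xplus x)
  have hsplit : HF xplus - HF x + Hhat + ((α + 2 * L₂) / 2 * ‖s‖) • 1 =
      (HF xplus - HF x + (L₂ * ‖s‖) • 1) + (Hhat + (α / 2 * ‖s‖) • 1) := by
    module
  have hpsd := hsplit ▸ hlip.add hcubic
  refine ⟨hpsd, lambdaMin_sub_le_lambdaMin (by positivity) ?_⟩
  convert hpsd using 2
  abel
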